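/- Fix τ > 2 and ε ∈ (0, 1/(2τ−1)), and let d₁,…,dₙ be i.i.d. copies of D. Then there exist constants c₁, c₂ > 0 depending only on τ such that for all sufficiently large n, with probability at least 1 − exp(−n^{ε/3}), for every integer i with ⌈n^ε⌉ ≤ i ≤ n one has c₁·(n/i)^{1/(τ−1)} ≤ d^{(i)} ≤ c₂·(n/i)^{1/(τ−1)}. -/

import Mathlib

open MeasureTheory ProbabilityTheory

/-- The normalizing constant `C_τ = (∑_{j ≥ 3} j^{-τ})⁻¹` of the power-law distribution. -/
noncomputable def Ctau (τ : ℝ) : ℝ := (∑' j : ℕ, if 3 ≤ j then (j : ℝ) ^ (-τ) else 0)⁻¹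

/-- The `i`-th order statistic (nonincreasing rearrangement) of `d₁, …, dₙ`:
`d⁽ⁱ⁾` is the largest `x` such that at least `i` of the values `dⱼ` satisfy `dⱼ ≥ x`. -/
noncomputable def orderStat (n : ℕ) (d : Fin n → ℕ) (i : ℕ) : ℕ :=
  sSup {x : ℕ | i ≤ (Finset.univ.filter fun j : Fin n => x ≤ d j).card}

open Filter Finset Real

/-!
Write `t = (n / i) ^ (1 / (τ - 1))`. Comparing `∑_{k ≥ x} k ^ (-τ)` with `∫_x^∞ y ^ (-τ) dy`
(by the mean value theorem on each unit interval) gives `P(D ≥ x) ≍ x ^ (1 - τ)` for `x ≥ 3`, so the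
number `N_x` of indices `j < n` with `d j ≥ x` is a sum of `n` independent indicators with mean
`≍ n x ^ (1 - τ)`. Since `x ≤ d⁽ⁱ⁾ ↔ i ≤ N_x`, taking `x ≈ c₁ t` makes the mean at least `2 i` and
`x ≈ c₂ t` makes it at most `i / 2`; Chernoff's bound with exponential moments at `± log 2` then
bounds each failure probability by `exp (-(log 2 - 1/2) i)`. A union bound over `⌈n ^ ε⌉ ≤ i ≤ n`
leaves a geometric tail of order `exp (-(log 2 - 1/2) n ^ ε)`, which is below `exp (-n ^ (ε / 3))`
for large `n`.
-/

section TailSum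

variable {τ x : ℝ}

lemma inv_mul_rpow_one_sub_sub_mem_Icc (hτ : 1 < τ) (hx : 0 < x) :
    (τ - 1)⁻¹ * (x ^ (1 - τ) - (x + 1) ^ (1 - τ)) ∈ Set.Icc ((x + 1) ^ (-τ)) (x ^ (-τ)) := by
  have hderiv : ∀ y ∈ Set.Ioo x (x + 1), HasDerivAt (· ^ (1 - τ)) ((1 - τ) * y ^ (-τ)) y :=
    fun y hy => by
      simpa [sub_sub_cancel_left] using
        hasDerivAt_rpow_const (p := 1 - τ) (.inl (hx.trans hy.1).ne')
  have hcont : ContinuousOn (· ^ (1 - τ)) (Set.Icc x (x + 1)) := fun y hy =>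
    (continuousAt_rpow_const y _ (.inl (hx.trans_le hy.1).ne')).continuousWithinAt
  obtain ⟨c, hc, hslope⟩ := exists_hasDerivAt_eq_slope _ _ (lt_add_one x) hcont hderiv
  have hmvt : (τ - 1)⁻¹ * (x ^ (1 - τ) - (x + 1) ^ (1 - τ)) = c ^ (-τ) := by
    rw [add_sub_cancel_left, div_one] at hslope
    rw [inv_mul_eq_iff_eq_mul₀ (by linarith)]
    linarith
  rw [hmvt]
  exact ⟨rpow_le_rpow_of_nonpos (hx.trans hc.1) hc.2.le (by linarith),
    rpow_le_rpow_of_nonpos hx hc.1.le (by linarith)⟩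

lemma hasSum_inv_mul_rpow_one_sub_sub (hτ : 1 < τ) (hx : 0 < x) :
    HasSum (fun k : ℕ => (τ - 1)⁻¹ * ((x + k) ^ (1 - τ) - (x + k + 1) ^ (1 - τ)))
      ((τ - 1)⁻¹ * x ^ (1 - τ)) := by
  refine HasSum.mul_left _ ?_
  have hnonneg (k : ℕ) : 0 ≤ (x + k) ^ (1 - τ) - (x + k + 1) ^ (1 - τ) :=
    sub_nonneg.2 (rpow_le_rpow_of_nonpos (by positivity) (by linarith) (by linarith))
  have hpartial (n : ℕ) : ∑ k ∈ range n, ((x + k) ^ (1 - τ) - (x + k + 1) ^ (1 - τ))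
      = x ^ (1 - τ) - (x + n) ^ (1 - τ) := by
    simpa [add_assoc] using sum_range_sub' (fun k : ℕ => (x + k) ^ (1 - τ)) n
  have hvanish : Tendsto (fun n : ℕ => (x + n) ^ (1 - τ)) atTop (nhds 0) := by
    have := (tendsto_rpow_neg_atTop (by linarith : 0 < τ - 1)).comp
      (tendsto_atTop_add_const_left _ x tendsto_natCast_atTop_atTop)
    simpa [Function.comp_def, neg_sub] using this
  rw [hasSum_iff_tendsto_nat_of_nonneg hnonneg]
  simpa [hpartial] using tendsto_const_nhds.sub hvanish

lemma summable_add_nat_add_one_rpow_neg (hτ : 1 < τ) (hx : 0 < x) :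
    Summable (fun k : ℕ => (x + k + 1) ^ (-τ)) :=
  (hasSum_inv_mul_rpow_one_sub_sub hτ hx).summable.of_nonneg_of_le (fun k => by positivity)
    fun k => (inv_mul_rpow_one_sub_sub_mem_Icc hτ (by positivity)).1

lemma summable_add_nat_rpow_neg (hτ : 1 < τ) (hx : 0 < x) :
    Summable (fun k : ℕ => (x + k) ^ (-τ)) := by
  refine (summable_nat_add_iff 1).1 ?_
  simpa [add_assoc] using summable_add_nat_add_one_rpow_neg hτ hx

lemma inv_mul_rpow_le_tsum_add_nat_rpow_neg (hτ : 1 < τ) (hx : 0 < x) :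
    (τ - 1)⁻¹ * x ^ (1 - τ) ≤ ∑' k : ℕ, (x + k) ^ (-τ) := by
  have htel := hasSum_inv_mul_rpow_one_sub_sub hτ hx
  exact htel.tsum_eq ▸ htel.summable.tsum_le_tsum
    (fun k => (inv_mul_rpow_one_sub_sub_mem_Icc hτ (by positivity)).2)
    (summable_add_nat_rpow_neg hτ hx)

lemma tsum_add_nat_rpow_neg_le (hτ : 1 < τ) (hx : 1 ≤ x) :
    ∑' k : ℕ, (x + k) ^ (-τ) ≤ (1 + (τ - 1)⁻¹) * x ^ (1 - τ) := by
  have hx0 : 0 < x := by linarith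
  have htel := hasSum_inv_mul_rpow_one_sub_sub hτ hx0
  have hhead : x ^ (-τ) ≤ x ^ (1 - τ) := rpow_le_rpow_of_exponent_le hx (by linarith)
  have htail : ∑' k : ℕ, (x + k + 1) ^ (-τ) ≤ (τ - 1)⁻¹ * x ^ (1 - τ) :=
    htel.tsum_eq ▸ (summable_add_nat_add_one_rpow_neg hτ hx0).tsum_le_tsum
      (fun k => (inv_mul_rpow_one_sub_sub_mem_Icc hτ (by positivity)).1) htel.summable
  rw [(summable_add_nat_rpow_neg hτ hx0).tsum_eq_zero_add]
  push_cast [← add_assoc, add_zero]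
  linarith

end TailSum

lemma tendsto_mul_rpow_sub_rpow_atTop {c δ ε : ℝ} (hc : 0 < c) (hδ : 0 < δ) (hδε : δ < ε) :
    Tendsto (fun x : ℝ => c * x ^ ε - x ^ δ) atTop atTop := by
  have hfactor : Tendsto (fun x : ℝ => x ^ δ * (c * x ^ (ε - δ) - 1)) atTop atTop :=
    (tendsto_rpow_atTop hδ).atTop_mul_atTop₀ <| tendsto_atTop_add_const_right _ _ <|
      (tendsto_rpow_atTop (sub_pos.2 hδε)).const_mul_atTop hc
  refine hfactor.congr' ((eventually_gt_atTop 0).mono fun x hx => ?_)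
  rw [mul_sub, mul_one, mul_left_comm, ← rpow_add hx, add_sub_cancel]

lemma sum_Icc_exp_neg_mul_le {c : ℝ} (hc : 0 < c) (m n : ℕ) :
    ∑ i ∈ Icc m n, exp (-c * i) ≤ exp (-c * m) / (1 - exp (-c)) := by
  simp_rw [mul_comm (-c), exp_nat_mul]
  exact geom_sum_Ico_le_of_lt_one (exp_pos _).le (exp_lt_one_iff.2 (neg_lt_zero.2 hc))

lemma eventually_sum_Icc_ceil_rpow_exp_le {c ε : ℝ} (hc : 0 < c) (hε : 0 < ε) :
    ∀ᶠ n : ℕ in atTop, ∑ i ∈ Icc ⌈(n : ℝ) ^ ε⌉₊ n, 2 * exp (-c * i) ≤ exp (-(n : ℝ) ^ (ε / 3)) := by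
  have hr : 0 < 1 - exp (-c) := sub_pos.2 (exp_lt_one_iff.2 (neg_lt_zero.2 hc))
  filter_upwards [((tendsto_mul_rpow_sub_rpow_atTop hc (δ := ε / 3) (ε := ε) (by positivity)
    (by linarith)).comp tendsto_natCast_atTop_atTop).eventually_ge_atTop (log (2 / (1 - exp (-c))))]
    with n hn
  calc ∑ i ∈ Icc ⌈(n : ℝ) ^ ε⌉₊ n, 2 * exp (-c * i)
      ≤ 2 * (exp (-c * ⌈(n : ℝ) ^ ε⌉₊) / (1 - exp (-c))) := by
        rw [← mul_sum]
        exact mul_le_mul_of_nonneg_left (sum_Icc_exp_neg_mul_le hc _ _) two_pos.le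
    _ ≤ 2 * (exp (-c * (n : ℝ) ^ ε) / (1 - exp (-c))) := by
        gcongr 2 * (exp ?_ / _)
        exact mul_le_mul_of_nonpos_left (Nat.le_ceil _) (neg_nonpos.2 hc.le)
    _ = exp (log (2 / (1 - exp (-c))) - c * (n : ℝ) ^ ε) := by
        rw [exp_sub, exp_log (by positivity), neg_mul, exp_neg]
        field_simp
    _ ≤ exp (-(n : ℝ) ^ (ε / 3)) := by
        rw [exp_le_exp]
        simp only [Function.comp_apply] at hn
        linarith

lemma ProbabilityTheory.iIndepFun.iIndepSet_preimage {Ω ι β : Type*} {_ : MeasurableSpace Ω}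
    [MeasurableSpace β] {μ : Measure Ω} {f : ι → Ω → β} (hf : ∀ i, Measurable (f i))
    (h : iIndepFun f μ) {s : Set β} (hs : MeasurableSet s) :
    iIndepSet (fun i => f i ⁻¹' s) μ :=
  (iIndepSet_iff_meas_biInter fun i => hf i hs).2 fun _ => h.meas_biInter fun _ _ => ⟨s, hs, rfl⟩

section Chernoff

variable {Ω : Type*} [MeasurableSpace Ω] {P : Measure Ω} [IsProbabilityMeasure P]

lemma mgf_indicator_one {A : Set Ω} (hA : MeasurableSet A) (t : ℝ) :
    mgf (A.indicator 1) P t = 1 + (exp t - 1) * P.real A := by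
  have hexp : (fun ω => exp (t * A.indicator 1 ω))
      = fun ω => 1 + (exp t - 1) * A.indicator 1 ω := by
    ext ω
    by_cases h : ω ∈ A <;> simp [h]
  rw [mgf, hexp, integral_add (integrable_const _) ((integrable_indicator_iff hA).2
      (integrable_const _).integrableOn |>.const_mul _), integral_const_mul,
    integral_indicator_one hA]
  simp

variable {E : ℕ → Set Ω}

lemma mgf_sum_indicator_le (hE : ∀ j, MeasurableSet (E j)) (hind : iIndepSet E P) (n : ℕ) (t : ℝ) :
    mgf (∑ j ∈ range n, (E j).indicator 1) P t
      ≤ exp ((exp t - 1) * ∑ j ∈ range n, P.real (E j)) := by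
  have hX : iIndepFun (fun j => (E j).indicator (1 : Ω → ℝ)) P := hind.iIndepFun_indicator
  rw [hX.mgf_sum (fun j => measurable_one.indicator (hE j)), mul_sum, exp_sum]
  refine prod_le_prod (fun j _ => mgf_nonneg) fun j _ => ?_
  rw [mgf_indicator_one (hE j)]
  linarith [add_one_le_exp ((exp t - 1) * P.real (E j))]

lemma integrable_exp_mul_sum_indicator (hE : ∀ j, MeasurableSet (E j)) (hind : iIndepSet E P)
    (n : ℕ) (t : ℝ) :
    Integrable (fun ω => exp (t * (∑ j ∈ range n, (E j).indicator 1) ω)) P := by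
  have hX : iIndepFun (fun j => (E j).indicator (1 : Ω → ℝ)) P := hind.iIndepFun_indicator
  refine hX.integrable_exp_mul_sum (fun j => measurable_one.indicator (hE j)) fun j _ => ?_
  exact integrable_exp_mul_of_mem_Icc (a := 0) (b := 1)
    (measurable_one.indicator (hE j)).aemeasurable
    (ae_of_all _ fun ω => by by_cases h : ω ∈ E j <;> simp [h])

lemma measure_ge_sum_indicator_le (hE : ∀ j, MeasurableSet (E j)) (hind : iIndepSet E P)
    {n : ℕ} {a : ℝ} (hp : ∑ j ∈ range n, P.real (E j) ≤ a / 2) :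
    P {ω | a ≤ (∑ j ∈ range n, (E j).indicator 1) ω}
      ≤ ENNReal.ofReal (exp (-(log 2 - 1 / 2) * a)) := by
  rw [ENNReal.le_ofReal_iff_toReal_le (measure_ne_top _ _) (exp_pos _).le, ← measureReal_def]
  refine (measure_ge_le_exp_mul_mgf a (log_nonneg one_le_two)
    (integrable_exp_mul_sum_indicator hE hind n _)).trans ?_
  calc exp (-log 2 * a) * mgf _ P (log 2)
      ≤ exp (-log 2 * a) * exp ((exp (log 2) - 1) * ∑ j ∈ range n, P.real (E j)) := by
        gcongr
        exact mgf_sum_indicator_le hE hind n _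
    _ ≤ exp (-(log 2 - 1 / 2) * a) := by
        rw [← exp_add, exp_log two_pos, exp_le_exp]
        linarith

lemma measure_sum_indicator_le_le (hE : ∀ j, MeasurableSet (E j)) (hind : iIndepSet E P)
    {n : ℕ} {a : ℝ} (ha : 0 ≤ a) (hp : 2 * a ≤ ∑ j ∈ range n, P.real (E j)) :
    P {ω | (∑ j ∈ range n, (E j).indicator 1) ω ≤ a}
      ≤ ENNReal.ofReal (exp (-(log 2 - 1 / 2) * a)) := by
  rw [ENNReal.le_ofReal_iff_toReal_le (measure_ne_top _ _) (exp_pos _).le, ← measureReal_def]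
  refine (measure_le_le_exp_mul_mgf a (neg_nonpos.2 (log_nonneg one_le_two))
    (integrable_exp_mul_sum_indicator hE hind n _)).trans ?_
  have hlog2 := log_two_lt_d9
  calc exp (-(-log 2) * a) * mgf _ P (-log 2)
      ≤ exp (-(-log 2) * a) * exp ((exp (-log 2) - 1) * ∑ j ∈ range n, P.real (E j)) := by
        gcongr
        exact mgf_sum_indicator_le hE hind n _
    _ ≤ exp (-(log 2 - 1 / 2) * a) := by
        rw [← exp_add, exp_neg, exp_log two_pos, exp_le_exp]
        nlinarith

end Chernoff

lemma le_orderStat_iff {n : ℕ} (d : Fin n → ℕ) {i x : ℕ} (hi : 1 ≤ i) (hx : 1 ≤ x) :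
    x ≤ orderStat n d i ↔ i ≤ #{j | x ≤ d j} := by
  have hanti {y z : ℕ} (hyz : y ≤ z) : #{j | z ≤ d j} ≤ #{j | y ≤ d j} :=
    card_le_card fun j hj => by simp only [mem_filter, mem_univ, true_and] at hj ⊢; omega
  have hbdd : BddAbove {y : ℕ | i ≤ #{j | y ≤ d j}} := ⟨univ.sup d, fun y (hy : i ≤ _) => by
    obtain ⟨j, hj⟩ := card_pos.1 (hi.trans hy)
    exact (mem_filter.1 hj).2.trans (le_sup (mem_univ j))⟩
  refine ⟨fun h => ?_, fun h => le_csSup hbdd h⟩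
  have hne : {y : ℕ | i ≤ #{j | y ≤ d j}}.Nonempty := by
    by_contra hempty
    rw [Set.not_nonempty_iff_eq_empty] at hempty
    simp only [orderStat, hempty, csSup_empty, bot_eq_zero] at h
    omega
  exact (Nat.sSup_mem hne hbdd).trans (hanti h)

lemma natCast_card_le_eq_sum_indicator {Ω : Type*} (d : ℕ → Ω → ℕ) (n x : ℕ) (ω : Ω) :
    (#{j : Fin n | x ≤ d j ω} : ℝ) = (∑ j ∈ range n, (d j ⁻¹' Set.Ici x).indicator 1) ω := by
  rw [natCast_card_filter, Fin.sum_univ_eq_sum_range (fun j => if x ≤ d j ω then (1 : ℝ) else 0),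
    Finset.sum_apply]
  refine sum_congr rfl fun j _ => ?_
  by_cases h : x ≤ d j ω <;> simp [h]

lemma Ctau_nonneg (τ : ℝ) : 0 ≤ Ctau τ :=
  inv_nonneg.2 (tsum_nonneg fun j => by split_ifs <;> positivity)

lemma Ctau_pos {τ : ℝ} (hτ : 1 < τ) : 0 < Ctau τ := by
  have hnonneg (j : ℕ) : 0 ≤ if 3 ≤ j then (j : ℝ) ^ (-τ) else 0 := by
    split_ifs <;> positivity
  have hsum : Summable fun j : ℕ => if 3 ≤ j then (j : ℝ) ^ (-τ) else 0 :=
    (summable_nat_rpow.2 (by linarith : -τ < -1)).of_nonneg_of_le hnonneg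
      fun j => by split_ifs <;> [exact le_rfl; positivity]
  refine inv_pos.2 ((by positivity : (0 : ℝ) < (3 : ℕ) ^ (-τ)).trans_le ?_)
  simpa using hsum.le_tsum 3 fun j _ => hnonneg j

section Scaling

variable {τ : ℝ}

lemma rpow_one_div_sub_one_rpow_one_sub (hτ : τ ≠ 1) {y : ℝ} (hy : 0 ≤ y) :
    (y ^ (1 / (τ - 1))) ^ (1 - τ) = y⁻¹ := by
  rw [← rpow_mul hy, show 1 / (τ - 1) * (1 - τ) = -1 by field_simp [sub_ne_zero.2 hτ]; ring,
    rpow_neg_one]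

lemma mul_mul_div_rpow_rpow_one_sub (hτ : τ ≠ 1) {c N I : ℝ} (hc : 0 ≤ c) (hN : 0 < N)
    (hI : 0 < I) :
    N * (c * (N / I) ^ (1 / (τ - 1))) ^ (1 - τ) = c ^ (1 - τ) * I := by
  rw [mul_rpow hc (by positivity), rpow_one_div_sub_one_rpow_one_sub hτ (by positivity), inv_div]
  field_simp

end Scaling

/- With `a = C_τ / (τ - 1)` and `b = C_τ (1 + 1 / (τ - 1))` the constants of the tail bounds
`IsPowerLawSample.tail_ge` and `IsPowerLawSample.tail_le`, these are chosen so that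
`n a (2 c₁ t) ^ (1 - τ) = 2 i` and `n b (c₂ t) ^ (1 - τ) ≤ i / 2` for `t = (n / i) ^ (1 / (τ - 1))`;
`c₂ ≥ 3` keeps `c₂ t` in the range `x ≥ 3` of the tail bounds. -/
noncomputable def orderStatLowerConst (τ : ℝ) : ℝ :=
  (Ctau τ * (τ - 1)⁻¹ / 2) ^ (1 / (τ - 1)) / 2

noncomputable def orderStatUpperConst (τ : ℝ) : ℝ :=
  max 3 ((2 * (Ctau τ * (1 + (τ - 1)⁻¹))) ^ (1 / (τ - 1)))

lemma orderStatLowerConst_pos {τ : ℝ} (hτ : 1 < τ) : 0 < orderStatLowerConst τ := by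
  have := Ctau_pos hτ
  have : 0 < τ - 1 := by linarith
  unfold orderStatLowerConst
  positivity

lemma three_le_orderStatUpperConst (τ : ℝ) : 3 ≤ orderStatUpperConst τ := le_max_left _ _

section PowerLaw

variable {Ω : Type*} [MeasurableSpace Ω] {P : Measure Ω} {τ : ℝ} {d : ℕ → Ω → ℕ}

structure IsPowerLawSample (τ : ℝ) (P : Measure Ω) (d : ℕ → Ω → ℕ) : Prop where
  measurable : ∀ i, Measurable (d i)
  indep : iIndepFun d P
  measure_eq_zero : ∀ i, ∀ k : ℕ, k < 3 → P {ω | d i ω = k} = 0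
  measure_eq : ∀ i, ∀ k : ℕ, 3 ≤ k → P {ω | d i ω = k} = ENNReal.ofReal (Ctau τ * (k : ℝ) ^ (-τ))

namespace IsPowerLawSample

lemma ae_three_le (hd : IsPowerLawSample τ P d) (i : ℕ) : ∀ᵐ ω ∂P, 3 ≤ d i ω := by
  refine measure_mono_null (fun ω (hω : ¬3 ≤ d i ω) => ?_)
    (measure_iUnion_null fun k : Fin 3 => hd.measure_eq_zero i k k.isLt)
  exact Set.mem_iUnion.2 ⟨⟨d i ω, by omega⟩, rfl⟩

lemma tail_eq (hτ : 1 < τ) (hd : IsPowerLawSample τ P d) (i : ℕ) {x : ℕ} (hx : 3 ≤ x) :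
    P.real {ω | x ≤ d i ω} = Ctau τ * ∑' k : ℕ, ((x : ℝ) + k) ^ (-τ) := by
  have hunion : {ω | x ≤ d i ω} = ⋃ k : ℕ, {ω | d i ω = x + k} := by
    ext ω
    simpa [eq_comm] using ⟨fun h => ⟨d i ω - x, by omega⟩, fun ⟨k, hk⟩ => by omega⟩
  have hdisj : Pairwise (Function.onFun Disjoint fun k : ℕ => {ω | d i ω = x + k}) :=
    fun k l hkl => Set.disjoint_left.2 fun ω hk hl => hkl (by simp_all)
  rw [measureReal_def, hunion,
    measure_iUnion hdisj fun k => hd.measurable i (measurableSet_singleton _), ← tsum_mul_left]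
  have hC := Ctau_nonneg τ
  rw [← ENNReal.toReal_ofReal (tsum_nonneg fun k => by positivity),
    ENNReal.ofReal_tsum_of_nonneg (fun k => by positivity)
      ((summable_add_nat_rpow_neg hτ (by positivity)).mul_left _)]
  congr 1
  refine tsum_congr fun k => ?_
  rw [hd.measure_eq i (x + k) (by omega)]
  push_cast
  rfl

lemma tail_ge (hτ : 1 < τ) (hd : IsPowerLawSample τ P d) (i : ℕ) {x : ℕ} (hx : 3 ≤ x) :
    Ctau τ * (τ - 1)⁻¹ * (x : ℝ) ^ (1 - τ) ≤ P.real {ω | x ≤ d i ω} := by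
  rw [hd.tail_eq hτ i hx, mul_assoc]
  exact mul_le_mul_of_nonneg_left (inv_mul_rpow_le_tsum_add_nat_rpow_neg hτ (by positivity))
    (Ctau_nonneg τ)

lemma tail_le (hτ : 1 < τ) (hd : IsPowerLawSample τ P d) (i : ℕ) {x : ℕ} (hx : 3 ≤ x) :
    P.real {ω | x ≤ d i ω} ≤ Ctau τ * (1 + (τ - 1)⁻¹) * (x : ℝ) ^ (1 - τ) := by
  rw [hd.tail_eq hτ i hx, mul_assoc]
  exact mul_le_mul_of_nonneg_left (tsum_add_nat_rpow_neg_le hτ (by norm_cast; omega))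
    (Ctau_nonneg τ)

lemma measure_le_orderStat_le (hτ : 1 < τ) (hd : IsPowerLawSample τ P d) {n i x : ℕ}
    (hi : 1 ≤ i) (hx : 3 ≤ x)
    (hnx : n * (Ctau τ * (1 + (τ - 1)⁻¹) * (x : ℝ) ^ (1 - τ)) ≤ i / 2) :
    P {ω | x ≤ orderStat n (fun j => d j ω) i} ≤ ENNReal.ofReal (exp (-(log 2 - 1 / 2) * i)) := by
  have := hd.indep.isProbabilityMeasure
  have hevent : {ω | x ≤ orderStat n (fun j => d j ω) i}
      = {ω | (i : ℝ) ≤ (∑ j ∈ range n, (d j ⁻¹' Set.Ici x).indicator 1) ω} := by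
    ext ω
    simp only [Set.mem_ofPred_eq, le_orderStat_iff _ hi (by omega : 1 ≤ x),
      ← natCast_card_le_eq_sum_indicator, Nat.cast_le]
  rw [hevent]
  refine measure_ge_sum_indicator_le (fun j => hd.measurable j measurableSet_Ici)
    (hd.indep.iIndepSet_preimage hd.measurable measurableSet_Ici) ?_
  calc ∑ j ∈ range n, P.real (d j ⁻¹' Set.Ici x)
      ≤ ∑ j ∈ range n, Ctau τ * (1 + (τ - 1)⁻¹) * (x : ℝ) ^ (1 - τ) :=
        sum_le_sum fun j _ => hd.tail_le hτ j hx
    _ ≤ i / 2 := by simpa using hnx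

lemma measure_orderStat_lt_le (hτ : 1 < τ) (hd : IsPowerLawSample τ P d) {n i x : ℕ}
    (hi : 1 ≤ i) (hin : i ≤ n) (hx : 1 ≤ x)
    (hnx : 3 < x → 2 * i ≤ n * (Ctau τ * (τ - 1)⁻¹ * (x : ℝ) ^ (1 - τ))) :
    P {ω | orderStat n (fun j => d j ω) i < x} ≤ ENNReal.ofReal (exp (-(log 2 - 1 / 2) * i)) := by
  have := hd.indep.isProbabilityMeasure
  have hevent : {ω | orderStat n (fun j => d j ω) i < x}
      = {ω | #{j : Fin n | x ≤ d j ω} < i} := by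
    ext ω
    simp only [Set.mem_ofPred_eq, ← not_le, le_orderStat_iff _ hi hx]
  rw [hevent]
  by_cases hx3 : x ≤ 3
  -- almost surely every `d j` is at least `3 ≥ x`, so all `n ≥ i` indices are counted
  · have hnull := ae_iff.1 (ae_all_iff.2 hd.ae_three_le)
    refine (measure_mono_null ?_ hnull).trans_le zero_le
    intro ω (hω : #{j : Fin n | x ≤ d j ω} < i) (h3 : ∀ j, 3 ≤ d j ω)
    rw [filter_true_of_mem fun (j : Fin n) _ => hx3.trans (h3 j), card_univ, Fintype.card_fin] at hω
    omega
  have hsub : {ω | #{j : Fin n | x ≤ d j ω} < i}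
      ⊆ {ω | (∑ j ∈ range n, (d j ⁻¹' Set.Ici x).indicator 1) ω ≤ (i : ℝ)} := fun ω hω => by
    simp only [Set.mem_ofPred_eq, ← natCast_card_le_eq_sum_indicator] at hω ⊢
    exact_mod_cast hω.le
  refine (measure_mono hsub).trans (measure_sum_indicator_le_le
    (fun j => hd.measurable j measurableSet_Ici)
    (hd.indep.iIndepSet_preimage hd.measurable measurableSet_Ici) (Nat.cast_nonneg i) ?_)
  calc 2 * (i : ℝ) ≤ ∑ j ∈ range n, Ctau τ * (τ - 1)⁻¹ * (x : ℝ) ^ (1 - τ) := by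
        simpa using hnx (by omega)
    _ ≤ ∑ j ∈ range n, P.real (d j ⁻¹' Set.Ici x) :=
        sum_le_sum fun j _ => hd.tail_ge hτ j (by omega)

lemma measure_orderStat_lt_lowerConst_le (hτ : 1 < τ) (hd : IsPowerLawSample τ P d) {n i : ℕ}
    (hi : 1 ≤ i) (hin : i ≤ n) :
    P {ω | (orderStat n (fun j => d j ω) i : ℝ)
        < orderStatLowerConst τ * ((n : ℝ) / i) ^ (1 / (τ - 1))}
      ≤ ENNReal.ofReal (exp (-(log 2 - 1 / 2) * i)) := by
  set t := ((n : ℝ) / i) ^ (1 / (τ - 1)) with ht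
  set c := orderStatLowerConst τ
  set a := Ctau τ * (τ - 1)⁻¹
  have hi0 : (0 : ℝ) < i := by exact_mod_cast hi
  have hn0 : (0 : ℝ) < n := hi0.trans_le (by exact_mod_cast hin)
  have hc : 0 < c := orderStatLowerConst_pos hτ
  have hct : 0 < c * t := by positivity
  have ha : 0 < a := mul_pos (Ctau_pos hτ) (inv_pos.2 (by linarith))
  refine (measure_mono fun ω (hω : (_ : ℝ) < c * t) => (Nat.lt_ceil.2 hω : _ < ⌈c * t⌉₊)).trans
    (hd.measure_orderStat_lt_le hτ hi hin (Nat.one_le_ceil_iff.2 hct) fun h3 => ?_)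
  have h3 : 3 < c * t := Nat.lt_ceil.1 h3
  have hx : (⌈c * t⌉₊ : ℝ) ≤ 2 * c * t := by linarith [Nat.ceil_lt_add_one hct.le]
  have h2c : 2 * c = (a / 2) ^ (1 / (τ - 1)) := by
    simp only [c, orderStatLowerConst]
    ring
  have hscale : n * (2 * c * t) ^ (1 - τ) = (a / 2)⁻¹ * i := by
    rw [ht, mul_mul_div_rpow_rpow_one_sub hτ.ne' (by positivity) hn0 hi0, h2c,
      rpow_one_div_sub_one_rpow_one_sub hτ.ne' (by positivity)]
  calc 2 * (i : ℝ) = n * (a * (2 * c * t) ^ (1 - τ)) := by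
        rw [mul_left_comm, hscale]; field_simp
    _ ≤ n * (a * (⌈c * t⌉₊ : ℝ) ^ (1 - τ)) := by
        refine mul_le_mul_of_nonneg_left (mul_le_mul_of_nonneg_left ?_ ha.le) hn0.le
        exact rpow_le_rpow_of_nonpos (by positivity) hx (by linarith)

lemma measure_upperConst_lt_orderStat_le (hτ : 1 < τ) (hd : IsPowerLawSample τ P d) {n i : ℕ}
    (hi : 1 ≤ i) (hin : i ≤ n) :
    P {ω | orderStatUpperConst τ * ((n : ℝ) / i) ^ (1 / (τ - 1)) < orderStat n (fun j => d j ω) i}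
      ≤ ENNReal.ofReal (exp (-(log 2 - 1 / 2) * i)) := by
  set t := ((n : ℝ) / i) ^ (1 / (τ - 1)) with ht
  set c := orderStatUpperConst τ
  set b := Ctau τ * (1 + (τ - 1)⁻¹)
  have hi0 : (0 : ℝ) < i := by exact_mod_cast hi
  have hn0 : (0 : ℝ) < n := hi0.trans_le (by exact_mod_cast hin)
  have ht1 : 1 ≤ t := one_le_rpow ((one_le_div hi0).2 (by exact_mod_cast hin)) (by
    have : 0 < τ - 1 := by linarith
    positivity)
  have hc : 3 ≤ c := three_le_orderStatUpperConst τ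
  have hb : 0 < b := mul_pos (Ctau_pos hτ) (add_pos one_pos (inv_pos.2 (by linarith)))
  have hct : 3 ≤ c * t := by nlinarith
  have hx : c * t < (⌊c * t⌋₊ + 1 : ℕ) := by push_cast; exact Nat.lt_floor_add_one _
  have hx3 : 3 ≤ ⌊c * t⌋₊ + 1 := by
    have := Nat.le_floor (by exact_mod_cast hct : ((3 : ℕ) : ℝ) ≤ c * t)
    omega
  refine (measure_mono fun ω (hω : c * t < _) =>
    (show ⌊c * t⌋₊ + 1 ≤ _ from (Nat.floor_lt (by linarith)).2 hω)).trans
    (hd.measure_le_orderStat_le hτ hi hx3 ?_)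
  have hc_pow : c ^ (1 - τ) ≤ (2 * b)⁻¹ := by
    rw [← rpow_one_div_sub_one_rpow_one_sub hτ.ne' (by positivity : (0 : ℝ) ≤ 2 * b)]
    exact rpow_le_rpow_of_nonpos (by positivity) (le_max_right _ _) (by linarith)
  calc n * (b * ((⌊c * t⌋₊ + 1 : ℕ) : ℝ) ^ (1 - τ)) ≤ n * (b * (c * t) ^ (1 - τ)) := by
        refine mul_le_mul_of_nonneg_left (mul_le_mul_of_nonneg_left ?_ hb.le) hn0.le
        exact rpow_le_rpow_of_nonpos (by linarith) hx.le (by linarith)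
    _ = b * c ^ (1 - τ) * i := by
        rw [mul_left_comm, ht, mul_mul_div_rpow_rpow_one_sub hτ.ne' (by linarith) hn0 hi0]
        ring
    _ ≤ b * (2 * b)⁻¹ * i := by gcongr
    _ = i / 2 := by field_simp

lemma measure_compl_orderStat_bounds_le (hτ : 1 < τ)
    (hd : IsPowerLawSample τ P d) {m : ℕ} (hm : 1 ≤ m) (n : ℕ) :
    P {ω | ∀ i : ℕ, m ≤ i → i ≤ n →
        orderStatLowerConst τ * ((n : ℝ) / i) ^ (1 / (τ - 1))
          ≤ (orderStat n (fun j => d j ω) i : ℝ) ∧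
        (orderStat n (fun j => d j ω) i : ℝ)
          ≤ orderStatUpperConst τ * ((n : ℝ) / i) ^ (1 / (τ - 1))}ᶜ
      ≤ ENNReal.ofReal (∑ i ∈ Icc m n, 2 * exp (-(log 2 - 1 / 2) * i)) := by
  set stat := fun (i : ℕ) ω => (orderStat n (fun j => d j ω) i : ℝ)
  set t := fun i : ℕ => ((n : ℝ) / i) ^ (1 / (τ - 1))
  have hcover : {ω | ∀ i : ℕ, m ≤ i → i ≤ n →
      orderStatLowerConst τ * t i ≤ stat i ω ∧ stat i ω ≤ orderStatUpperConst τ * t i}ᶜ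
      ⊆ ⋃ i ∈ Icc m n, ({ω | stat i ω < orderStatLowerConst τ * t i}
        ∪ {ω | orderStatUpperConst τ * t i < stat i ω}) := by
    intro ω hω
    simp only [Set.mem_compl_iff, Set.mem_ofPred_eq, not_forall, not_and_or, not_le] at hω
    obtain ⟨i, hmi, hin, hi⟩ := hω
    exact Set.mem_biUnion (mem_Icc.2 ⟨hmi, hin⟩) hi
  rw [ENNReal.ofReal_sum_of_nonneg fun i _ => by positivity]
  refine (measure_mono hcover).trans ((measure_biUnion_finset_le _ _).trans
    (sum_le_sum fun i hi => (measure_union_le _ _).trans ?_))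
  obtain ⟨hmi, hin⟩ := mem_Icc.1 hi
  rw [two_mul, ENNReal.ofReal_add (by positivity) (by positivity)]
  exact add_le_add (hd.measure_orderStat_lt_lowerConst_le hτ (hm.trans hmi) hin)
    (hd.measure_upperConst_lt_orderStat_le hτ (hm.trans hmi) hin)

end IsPowerLawSample

end PowerLaw

theorem powerLaw_orderStat_bounds (τ : ℝ) (hτ : 2 < τ) :
    ∃ c₁ c₂ : ℝ, 0 < c₁ ∧ 0 < c₂ ∧
      ∀ ε ∈ Set.Ioo (0 : ℝ) (1 / (2 * τ - 1)), ∃ N : ℕ, ∀ n : ℕ, N ≤ n →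
      ∀ (Ω : Type) (mΩ : MeasurableSpace Ω) (P : Measure Ω), IsProbabilityMeasure P →
      ∀ d : ℕ → Ω → ℕ,
      (∀ i, Measurable (d i)) →
      iIndepFun d P →
      (∀ i, ∀ k : ℕ, k < 3 → P {ω | d i ω = k} = 0) →
      (∀ i, ∀ k : ℕ, 3 ≤ k →
          P {ω | d i ω = k} = ENNReal.ofReal (Ctau τ * (k : ℝ) ^ (-τ))) →
      1 - ENNReal.ofReal (Real.exp (-(n : ℝ) ^ (ε / 3))) ≤
        P {ω | ∀ i : ℕ, ⌈(n : ℝ) ^ ε⌉₊ ≤ i → i ≤ n →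
          c₁ * ((n : ℝ) / i) ^ (1 / (τ - 1)) ≤ (orderStat n (fun j => d (j : ℕ) ω) i : ℝ) ∧
          (orderStat n (fun j => d (j : ℕ) ω) i : ℝ) ≤ c₂ * ((n : ℝ) / i) ^ (1 / (τ - 1))} := by
  have hτ1 : 1 < τ := by linarith
  have hrate : 0 < log 2 - 1 / 2 := by linarith [log_two_gt_d9]
  refine ⟨orderStatLowerConst τ, orderStatUpperConst τ, orderStatLowerConst_pos hτ1,
    by linarith [three_le_orderStatUpperConst τ], fun ε hε => ?_⟩
  obtain ⟨N, hN⟩ := eventually_atTop.1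
    ((eventually_sum_Icc_ceil_rpow_exp_le hrate hε.1).and (eventually_ge_atTop 1))
  refine ⟨N, fun n hn Ω _ P _ d hmeas hind hlow hpmf => ?_⟩
  obtain ⟨hsum, hn1⟩ := hN n hn
  have hd : IsPowerLawSample τ P d := ⟨hmeas, hind, hlow, hpmf⟩
  have hm : 1 ≤ ⌈(n : ℝ) ^ ε⌉₊ := Nat.one_le_ceil_iff.2 (by positivity)
  have hbad := (hd.measure_compl_orderStat_bounds_le hτ1 hm n).trans (ENNReal.ofReal_le_ofReal hsum)
  rw [tsub_le_iff_right, ← measure_univ (μ := P)]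
  exact (measure_univ_le_add_compl _).trans (add_le_add le_rfl hbad)
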